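/- arXiv:1711.03875 — 5 statements merged into one kernel-verified Lean document; each statement's English description precedes it below -/
import Mathlib

section
/- Let Ω be a Polish space and F the universal completion of its Borel σ-field. Let D ⊆ ℝ^{dT} satisfy the grid condition and let f : Ω × ℝ^{dT} → ℝ ∪ {−∞} be universally measurable with dom f(ω,·) ⊆ D for every ω ∈ Ω. Then for every compact set K ⊆ ℝ^{dT}, the function g(ω) := sup_{x ∈ K} f(ω,x) (with g(ω) = −∞ if D ∩ K = ∅) is F-measurable. -/
/-! The grid condition makes `D` uniformly discrete in the sup metric, so its trace on the compact
set `K` is finite. Since `f ω` is `⊥` off `D`, the supremum over `K` is a supremum over this finite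
set of sections `ω ↦ f ω x`, and each section is universally measurable because pulling back along
the Borel map `ω ↦ (ω, x)` preserves universal measurability. -/

open MeasureTheory
open scoped ENNReal

noncomputable section

/-- The universal completion of the σ-algebra on `X`: sets that are `μ`-null-measurable for
every probability measure `μ`. -/
def univComp (X : Type*) [MeasurableSpace X] : MeasurableSpace X where
  MeasurableSet' s := ∀ μ : Measure X, IsProbabilityMeasure μ → NullMeasurableSet s μ
  measurableSet_empty := fun _ _ => MeasurableSet.empty.nullMeasurableSet
  measurableSet_compl := fun _ hs μ hμ => (hs μ hμ).compl
  measurableSet_iUnion := fun _ hf μ hμ => .iUnion fun i => hf i μ hμ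

/-- `ℝ^d`. -/
abbrev Rd (d : ℕ) := EuclideanSpace ℝ (Fin d)

/-- `ℝ^{dT}`, written in `T` blocks of `ℝ^d`. -/
abbrev Vec (d T : ℕ) := Fin T → Rd d

/-- The grid condition on a set `D ⊆ ℝ^{dT}`. -/
def GridCond {d T : ℕ} (D : Set (Vec d T)) : Prop :=
  ∃ ε : ℝ, 0 < ε ∧ ∀ i : Fin T, ∀ x ∈ D, ∀ y ∈ D, x i ≠ y i → ε ≤ dist (x i) (y i)

theorem TotallyBounded.finite_of_pairwise_le_dist {X : Type*} [PseudoMetricSpace X] {s : Set X}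
    (hs : TotallyBounded s) {ε : ℝ} (hε : 0 < ε) (hsep : s.Pairwise fun x y => ε ≤ dist x y) :
    s.Finite := by
  obtain ⟨t, hts, htfin, hcover⟩ := Metric.finite_approx_of_totallyBounded hs ε hε
  refine htfin.subset fun x hx => ?_
  obtain ⟨y, hyt, hxy⟩ := Set.mem_iUnion₂.mp (hcover hx)
  by_contra hxt
  have hne : x ≠ y := fun h => hxt (h ▸ hyt)
  exact (hsep hx (hts hyt) hne).not_gt (Metric.mem_ball.mp hxy)

theorem GridCond.exists_pairwise_le_dist {d T : ℕ} {D : Set (Vec d T)} (hD : GridCond D) :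
    ∃ ε > 0, D.Pairwise fun x y => ε ≤ dist x y := by
  obtain ⟨ε, hε, hsep⟩ := hD
  refine ⟨ε, hε, fun x hx y hy hxy => ?_⟩
  obtain ⟨i, hi⟩ := Function.ne_iff.mp hxy
  exact (hsep i x hx y hy hi).trans (dist_le_pi_dist x y i)

theorem GridCond.finite_inter {d T : ℕ} {D K : Set (Vec d T)} (hD : GridCond D)
    (hK : IsCompact K) : (D ∩ K).Finite := by
  obtain ⟨ε, hε, hsep⟩ := hD.exists_pairwise_le_dist
  exact (hK.totallyBounded.subset Set.inter_subset_right).finite_of_pairwise_le_dist hε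
    (hsep.mono Set.inter_subset_left)

theorem biSup_eq_biSup_inter_of_eq_bot {α β : Type*} [CompleteLattice β] {f : α → β} {D : Set α}
    (hf : ∀ x ∉ D, f x = ⊥) (K : Set α) : ⨆ x ∈ K, f x = ⨆ x ∈ D ∩ K, f x := by
  refine le_antisymm (iSup₂_le fun x hxK => ?_) (biSup_mono fun _ => And.right)
  by_cases hxD : x ∈ D
  · exact le_biSup f ⟨hxD, hxK⟩
  · simp only [hf x hxD, bot_le]

theorem Measurable.univComp {X Y : Type*} [MeasurableSpace X] [MeasurableSpace Y] {g : X → Y}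
    (hg : Measurable g) : Measurable[univComp X, univComp Y] g := fun _ hs μ _ =>
  have : IsProbabilityMeasure (μ.map g) := Measure.isProbabilityMeasure_map hg.aemeasurable
  (hs (μ.map g) this).preimage ⟨hg, .rfl⟩

theorem sup_over_compact_measurable_general
    {d T : ℕ}
    (Ω : Type*) [MeasurableSpace Ω]
    (D : Set (Vec d T)) (hD : GridCond D)
    (f : Ω → Vec d T → EReal)
    (hdom : ∀ ω x, x ∉ D → f ω x = ⊥)
    (hmeas : Measurable[univComp (Ω × Vec d T)] fun p : Ω × Vec d T => f p.1 p.2)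
    (K : Set (Vec d T)) (hK : IsCompact K) :
    Measurable[univComp Ω] fun ω => ⨆ x ∈ K, f ω x := by
  simp_rw [biSup_eq_biSup_inter_of_eq_bot (hdom _) K]
  exact Measurable.biSup _ (hD.finite_inter hK).countable fun x _ =>
    hmeas.comp (measurable_prodMk_right (y := x)).univComp

/-- The supremum over a compact set of a universally measurable function with grid-type
domain is universally measurable. -/
theorem sup_over_compact_measurable
    {d T : ℕ} (hd : 1 ≤ d) (hT : 1 ≤ T)
    (Ω : Type*) [MeasurableSpace Ω] [TopologicalSpace Ω] [PolishSpace Ω] [BorelSpace Ω]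
    (D : Set (Vec d T)) (hD : GridCond D)
    (f : Ω → Vec d T → EReal)
    (hnt : ∀ ω x, f ω x ≠ ⊤)
    (hdom : ∀ ω x, x ∉ D → f ω x = ⊥)
    (hmeas : Measurable[univComp (Ω × Vec d T)] fun p : Ω × Vec d T => f p.1 p.2)
    (K : Set (Vec d T)) (hK : IsCompact K) :
    Measurable[univComp Ω] fun ω => ⨆ x ∈ K, f ω x :=
  sup_over_compact_measurable_general Ω D hD f hdom hmeas K hK

end
end

section
/- In the one-period setting, suppose Ψ : Ω × ℝ^d → ℝ ∪ {−∞} satisfies Assumption 4.1 and the no-arbitrage condition K = {0} holds. Then there exists ĥ ∈ ℝ^d such that inf_{P∈𝔓} E^P[Ψ(ĥ)] = sup_{h∈ℝ^d} inf_{P∈𝔓} E^P[Ψ(h)]. -/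
open MeasureTheory
open scoped ENNReal

noncomputable section

/-- Conversion `EReal → ℝ≥0∞` (the positive part). -/
def EReal.toENN (x : EReal) : ℝ≥0∞ := if x = ⊤ then ⊤ else ENNReal.ofReal x.toReal

/-- The horizon function `f^∞(x) = lim_n sup {(1/δ) f(δ y) : δ > n, |x - y| < 1/n}`. -/
def horizon {E : Type*} [NormedAddCommGroup E] [NormedSpace ℝ E]
    (f : E → EReal) (x : E) : EReal :=
  ⨅ n : ℕ, ⨆ (δ : ℝ) (_ : ((n : ℝ) + 1) < δ) (y : E) (_ : ‖x - y‖ < 1 / ((n : ℝ) + 1)),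
    ((δ⁻¹ : ℝ) : EReal) * f (δ • y)

/-- The expectation `E^P[g] ∈ ℝ ∪ {−∞}` of a function `g` that is bounded above. -/
def eexp {X : Type*} [MeasurableSpace X] (P : Measure X) (g : X → EReal) : EReal :=
  ((∫⁻ x, (g x).toENN ∂P : ℝ≥0∞) : EReal) - ((∫⁻ x, (-(g x)).toENN ∂P : ℝ≥0∞) : EReal)

/-- A set is `𝔖`-polar if it is null for every measure in `𝔖`. -/
def IsPolar {X : Type*} [MeasurableSpace X] (𝔖 : Set (Measure X)) (A : Set X) : Prop :=
  ∀ P ∈ 𝔖, P A = 0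

/-- A property holds `𝔖`-quasi surely if it holds outside an `𝔖`-polar set. -/
def QuasiSure {X : Type*} [MeasurableSpace X] (𝔖 : Set (Measure X)) (p : X → Prop) : Prop :=
  IsPolar 𝔖 {x | ¬ p x}

/-- Assumption 4.1 of the paper on the one-period objective `Ψ`. -/
structure Assump1P {Ω : Type*} [MeasurableSpace Ω] {d : ℕ} (𝔖 : Set (Measure Ω))
    (Ψ : Ω → Rd d → EReal) (C : ℝ) : Prop where
  usc : ∀ ω, UpperSemicontinuous (Ψ ω)
  meas : Measurable fun p : Ω × Rd d => Ψ p.1 p.2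
  noTop : ∀ ω x, Ψ ω x ≠ ⊤
  bdd : ∀ ω x, Ψ ω x ≤ (C : EReal)
  zero : ⊥ < ⨅ P ∈ 𝔖, eexp P fun ω => Ψ ω 0

/-!
With `c := max C 0`, every expectation is `E^P[Ψ(h)] = c - E^P[(c - Ψ(h))⁺]`, so Fatou's lemma makes
`h ↦ E^P[Ψ(h)]` upper semicontinuous, and so is its infimum `Φ` over `𝔓`. No-arbitrage makes the
superlevel set `{Φ ≥ Φ(0)}` bounded: if `hₖ` were an unbounded sequence in it with directions
`hₖ / |hₖ| → x`, then `x ≠ 0`, so some `P ∈ 𝔓` charges `{Ψ^∞(x) < 0}`; there `Ψ(hₖ) ≤ |hₖ| r → -∞`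
for some `r < 0`, and Fatou's lemma again gives `E^P[Ψ(hₖ)] → -∞`, contradicting
`Φ(hₖ) ≥ Φ(0) > -∞`. The maximum of `Φ` on the compact set `{Φ ≥ Φ(0)}` is a global maximum.
-/

open Filter Topology Bornology

theorem EReal.toENN_eq_toENNReal : EReal.toENN = EReal.toENNReal := rfl

theorem EReal.continuous_coe_sub (c : ℝ) : Continuous fun y : EReal => (c : EReal) - y := by
  have hadd : Continuous fun y : EReal => (c : EReal) + y :=
    continuous_iff_continuousAt.2 fun y =>
      (EReal.continuousAt_add (p := ((c : EReal), y)) (Or.inl (by simp)) (Or.inl (by simp))).comp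
        (Continuous.continuousAt (by fun_prop))
  simpa only [sub_eq_add_neg, Function.comp_def] using hadd.comp continuous_neg

theorem EReal.antitone_coe_sub (c : ℝ) : Antitone fun y : EReal => (c : EReal) - y :=
  fun _ _ h => EReal.sub_le_sub le_rfl h

theorem EReal.toENNReal_add_toENNReal_coe_sub {c : ℝ} (hc : 0 ≤ c) {x : EReal} (hxc : x ≤ c) :
    x.toENNReal + ((c : EReal) - x).toENNReal = ENNReal.ofReal c + (-x).toENNReal := by
  induction x with
  | bot => simp
  | coe r =>
    rw [← EReal.coe_sub, ← EReal.coe_neg]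
    simp only [EReal.real_coe_toENNReal]
    have hrc : r ≤ c := by exact_mod_cast hxc
    rcases le_or_gt 0 r with hr | hr
    · rw [ENNReal.ofReal_of_nonpos (neg_nonpos.2 hr), add_zero,
        ← ENNReal.ofReal_add hr (by linarith)]
      ring_nf
    · rw [ENNReal.ofReal_of_nonpos hr.le, zero_add, ← ENNReal.ofReal_add hc (by linarith)]
      ring_nf
  | top => simp at hxc

theorem EReal.coe_ennreal_sub_eq_coe_sub {a b d : ℝ≥0∞} {c : ℝ} (hc : 0 ≤ c) (ha : a ≠ ⊤)
    (h : a + d = ENNReal.ofReal c + b) : (a : EReal) - b = c - d := by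
  rcases eq_or_ne b ⊤ with rfl | hb
  · have hd : d = ⊤ := by simpa [ha] using h
    simp [hd]
  have hd : d ≠ ⊤ := fun hd => by
    rw [hd, add_top, eq_comm, ENNReal.add_eq_top] at h
    simp [hb] at h
  lift a to NNReal using ha
  lift b to NNReal using hb
  lift d to NNReal using hd
  lift c to NNReal using hc
  simp only [ENNReal.ofReal_coe_nnreal] at h
  simp only [EReal.coe_nnreal_eq_coe_real, ← EReal.coe_sub, EReal.coe_eq_coe_iff]
  have : (a : ℝ) + d = c + b := by exact_mod_cast h
  linarith

theorem lowerSemicontinuous_lintegral {X E : Type*} [MeasurableSpace X] [TopologicalSpace E]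
    [FirstCountableTopology E] (μ : Measure X) {F : X → E → ℝ≥0∞}
    (hF : ∀ ω, LowerSemicontinuous (F ω)) (hmeas : ∀ x, Measurable fun ω => F ω x) :
    LowerSemicontinuous fun x => ∫⁻ ω, F ω x ∂μ :=
  lowerSemicontinuous_iff_le_liminf.2 fun x =>
    calc ∫⁻ ω, F ω x ∂μ ≤ ∫⁻ ω, liminf (F ω) (𝓝 x) ∂μ :=
          lintegral_mono fun ω => (hF ω).le_liminf x
      _ ≤ liminf (fun y => ∫⁻ ω, F ω y ∂μ) (𝓝 x) := lintegral_liminf_le hmeas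

section Expectation

variable {X E : Type*} [MeasurableSpace X]

theorem eexp_eq_sub_lintegral (P : Measure X) [IsProbabilityMeasure P] {c : ℝ} (hc : 0 ≤ c)
    {g : X → EReal} (hg : Measurable g) (hgc : ∀ x, g x ≤ c) :
    eexp P g = c - ((∫⁻ x, ((c : EReal) - g x).toENNReal ∂P : ℝ≥0∞) : EReal) := by
  rw [eexp, EReal.toENN_eq_toENNReal]
  refine EReal.coe_ennreal_sub_eq_coe_sub hc ?_ ?_
  · refine ne_top_of_le_ne_top (ENNReal.ofReal_ne_top (r := c)) ?_
    calc ∫⁻ x, (g x).toENNReal ∂P ≤ ∫⁻ _, ENNReal.ofReal c ∂P :=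
          lintegral_mono fun x => EReal.toENNReal_le_toENNReal (hgc x)
      _ = ENNReal.ofReal c := by simp
  · rw [← lintegral_add_left hg.ereal_toENNReal,
      lintegral_congr fun x => EReal.toENNReal_add_toENNReal_coe_sub hc (hgc x),
      lintegral_add_left measurable_const]
    simp

variable (P : Measure X) [IsProbabilityMeasure P] {Ψ : X → E → EReal} {c : ℝ}

theorem upperSemicontinuous_eexp [TopologicalSpace E] [FirstCountableTopology E] (hc : 0 ≤ c)
    (hΨc : ∀ ω x, Ψ ω x ≤ c) (hmeas : ∀ x, Measurable fun ω => Ψ ω x)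
    (husc : ∀ ω, UpperSemicontinuous (Ψ ω)) :
    UpperSemicontinuous fun x => eexp P fun ω => Ψ ω x := by
  have hshortfall : ∀ ω, LowerSemicontinuous fun x => ((c : EReal) - Ψ ω x).toENNReal :=
    fun ω => EReal.continuous_toENNReal.comp_lowerSemicontinuous
      ((EReal.continuous_coe_sub c).comp_upperSemicontinuous_antitone (husc ω)
        (EReal.antitone_coe_sub c))
      (fun _ _ => EReal.toENNReal_le_toENNReal)
  have hlint := lowerSemicontinuous_lintegral P hshortfall fun x =>
    ((EReal.continuous_coe_sub c).measurable.comp (hmeas x)).ereal_toENNReal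
  have := Continuous.comp_lowerSemicontinuous_antitone
    ((EReal.continuous_coe_sub c).comp continuous_coe_ennreal_ereal) hlint fun _ _ h =>
      EReal.antitone_coe_sub c (EReal.coe_ennreal_le_coe_ennreal_iff.2 h)
  simpa only [Function.comp_def, ← eexp_eq_sub_lintegral P hc (hmeas _) (hΨc · _)] using this

theorem tendsto_eexp_bot (hc : 0 ≤ c) (hΨc : ∀ ω x, Ψ ω x ≤ c)
    (hmeas : ∀ x, Measurable fun ω => Ψ ω x) {u : ℕ → E}
    (hbot : P {ω | Tendsto (fun k => Ψ ω (u k)) atTop (𝓝 ⊥)} ≠ 0) :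
    Tendsto (fun k => eexp P fun ω => Ψ ω (u k)) atTop (𝓝 ⊥) := by
  set F : ℕ → X → ℝ≥0∞ := fun k ω => ((c : EReal) - Ψ ω (u k)).toENNReal
  have hFmeas : ∀ k, Measurable (F k) := fun k =>
    ((EReal.continuous_coe_sub c).measurable.comp (hmeas (u k))).ereal_toENNReal
  have hFtop : ∀ ω, Tendsto (fun k => Ψ ω (u k)) atTop (𝓝 ⊥) → liminf (F · ω) atTop = ⊤ := by
    intro ω hω
    refine Tendsto.liminf_eq ?_
    have := (EReal.continuous_toENNReal.comp (EReal.continuous_coe_sub c)).tendsto _ |>.comp hω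
    simpa [Function.comp_def, F] using this
  have hlint : Tendsto (fun k => ∫⁻ ω, F k ω ∂P) atTop (𝓝 ⊤) := by
    refine tendsto_of_le_liminf_of_limsup_le ?_ le_top
    calc ⊤ = ∫⁻ ω, liminf (F · ω) atTop ∂P :=
          (lintegral_eq_top_of_measure_eq_top_ne_zero (Measurable.liminf hFmeas).aemeasurable
            fun h => hbot (measure_mono_null hFtop h)).symm
      _ ≤ liminf (fun k => ∫⁻ ω, F k ω ∂P) atTop := lintegral_liminf_le hFmeas
  have hsub :=
    ((EReal.continuous_coe_sub c).comp continuous_coe_ennreal_ereal).tendsto ⊤ |>.comp hlint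
  simpa [Function.comp_def, F, eexp_eq_sub_lintegral P hc (hmeas _) (hΨc · _)] using hsub

end Expectation

section Horizon

variable {E ι : Type*} [NormedAddCommGroup E] [NormedSpace ℝ E] {f : E → EReal} {x : E}
  {l : Filter ι} {u : ι → E}

theorem eventually_le_mul_of_horizon_lt {r : ℝ} (hr : horizon f x < r)
    (hnorm : Tendsto (fun i => ‖u i‖) l atTop) (hdir : Tendsto (fun i => ‖u i‖⁻¹ • u i) l (𝓝 x)) :
    ∀ᶠ i in l, f (u i) ≤ ((‖u i‖ * r : ℝ) : EReal) := by
  obtain ⟨N, hN⟩ := iInf_lt_iff.1 hr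
  have hclose : ∀ᶠ i in l, ‖x - ‖u i‖⁻¹ • u i‖ < 1 / ((N : ℝ) + 1) := by
    simpa only [dist_eq_norm', gt_iff_lt] using
      (Metric.tendsto_nhds.1 hdir) _ (by positivity : (0 : ℝ) < 1 / ((N : ℝ) + 1))
  filter_upwards [hnorm.eventually_gt_atTop ((N : ℝ) + 1), hclose] with i hlarge hnear
  have hpos : 0 < ‖u i‖ := by linarith
  have hscaled : ((‖u i‖⁻¹ : ℝ) : EReal) * f (u i) < r := by
    calc _ = ((‖u i‖⁻¹ : ℝ) : EReal) * f (‖u i‖ • ‖u i‖⁻¹ • u i) := by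
          rw [smul_smul, mul_inv_cancel₀ hpos.ne', one_smul]
      _ ≤ _ := le_iSup₂_of_le ‖u i‖ hlarge <|
          le_iSup₂_of_le (f := fun y _ => ((‖u i‖⁻¹ : ℝ) : EReal) * f (‖u i‖ • y)) _ hnear le_rfl
      _ < r := hN
  induction hfu : f (u i) with
  | bot => exact bot_le
  | coe q =>
    rw [hfu, ← EReal.coe_mul, EReal.coe_lt_coe_iff] at hscaled
    rw [EReal.coe_le_coe_iff]
    have := (mul_lt_mul_iff_right₀ hpos).2 hscaled
    rw [← mul_assoc, mul_inv_cancel₀ hpos.ne', one_mul] at this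
    exact this.le
  | top =>
    rw [hfu, EReal.coe_mul_top_of_pos (inv_pos.2 hpos)] at hscaled
    exact absurd hscaled (not_lt.2 le_top)

theorem tendsto_bot_of_horizon_neg (hx : horizon f x < 0)
    (hnorm : Tendsto (fun i => ‖u i‖) l atTop) (hdir : Tendsto (fun i => ‖u i‖⁻¹ • u i) l (𝓝 x)) :
    Tendsto (fun i => f (u i)) l (𝓝 ⊥) := by
  obtain ⟨r, hxr, hr⟩ := EReal.lt_iff_exists_real_btwn.1 hx
  have hrneg : r < 0 := by exact_mod_cast hr
  refine EReal.tendsto_nhds_bot_iff_real.2 fun M => ?_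
  filter_upwards [eventually_le_mul_of_horizon_lt hxr hnorm hdir,
    (hnorm.atTop_mul_const_of_neg hrneg).eventually_lt_atBot M] with i hle hlt
  exact hle.trans_lt (EReal.coe_lt_coe_iff.2 hlt)

end Horizon

theorem exists_seq_tendsto_direction_of_not_isBounded {E : Type*} [NormedAddCommGroup E]
    [NormedSpace ℝ E] [ProperSpace E] {s : Set E} (hs : ¬ IsBounded s) :
    ∃ (u : ℕ → E) (x : E), (∀ k, u k ∈ s) ∧ ‖x‖ = 1 ∧ Tendsto (fun k => ‖u k‖) atTop atTop ∧
      Tendsto (fun k => ‖u k‖⁻¹ • u k) atTop (𝓝 x) := by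
  simp only [isBounded_iff_forall_norm_le, not_exists, not_forall, not_le] at hs
  choose v hvs hvnorm using fun n : ℕ => hs n
  have hvpos : ∀ n, 0 < ‖v n‖ := fun n => (Nat.cast_nonneg n).trans_lt (hvnorm n)
  have hsphere : ∀ n, ‖v n‖⁻¹ • v n ∈ Metric.sphere (0 : E) 1 := fun n => by
    simp [norm_smul, (hvpos n).ne']
  obtain ⟨x, hx, φ, hφ, hlim⟩ := (isCompact_sphere (0 : E) 1).tendsto_subseq hsphere
  refine ⟨v ∘ φ, x, fun k => hvs (φ k), by simpa using hx, ?_, hlim⟩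
  exact (tendsto_atTop_mono (fun n => (hvnorm n).le) tendsto_natCast_atTop_atTop).comp
    hφ.tendsto_atTop

theorem UpperSemicontinuous.exists_forall_le_of_isBounded {E β : Type*} [PseudoMetricSpace E]
    [ProperSpace E] [LinearOrder β] {f : E → β} (hf : UpperSemicontinuous f)
    (x₀ : E) (hbdd : IsBounded {x | f x₀ ≤ f x}) : ∃ x, ∀ y, f y ≤ f x := by
  obtain ⟨x, hx, hmax⟩ := (hf.upperSemicontinuousOn {x | f x₀ ≤ f x}).exists_isMaxOn
    ⟨x₀, le_refl (f x₀)⟩ (Metric.isCompact_of_isClosed_isBounded (hf.isClosed_preimage (f x₀)) hbdd)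
  refine ⟨x, fun y => ?_⟩
  by_cases hy : f x₀ ≤ f y
  · exact hmax hy
  · exact (not_le.1 hy).le.trans hx

/-- The paper's `Φ`. -/
def robustValue {Ω E : Type*} [MeasurableSpace Ω] (𝔖 : Set (Measure Ω)) (Ψ : Ω → E → EReal)
    (h : E) : EReal :=
  ⨅ P ∈ 𝔖, eexp P fun ω => Ψ ω h

section Robust

variable {Ω E : Type*} [MeasurableSpace Ω] {𝔖 : Set (Measure Ω)} {Ψ : Ω → E → EReal} {c : ℝ}

theorem isBounded_superlevel_robustValue [NormedAddCommGroup E] [NormedSpace ℝ E] [ProperSpace E]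
    (hprob : ∀ P ∈ 𝔖, IsProbabilityMeasure P) (hc : 0 ≤ c) (hΨc : ∀ ω x, Ψ ω x ≤ c)
    (hmeas : ∀ x, Measurable fun ω => Ψ ω x)
    (hNA : ∀ h, QuasiSure 𝔖 (fun ω => 0 ≤ horizon (Ψ ω) h) → h = 0) {a : EReal} (ha : ⊥ < a) :
    IsBounded {h | a ≤ robustValue 𝔖 Ψ h} := by
  by_contra hunb
  obtain ⟨u, x, hu, hx, hnorm, hdir⟩ := exists_seq_tendsto_direction_of_not_isBounded hunb
  obtain ⟨P, hP, harb⟩ : ∃ P ∈ 𝔖, P {ω | ¬ 0 ≤ horizon (Ψ ω) x} ≠ 0 := by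
    have hx0 : x ≠ 0 := by rintro rfl; simp at hx
    simpa [QuasiSure, IsPolar] using mt (hNA x) hx0
  have := hprob P hP
  have hbot := tendsto_eexp_bot P hc hΨc hmeas (u := u) fun h => harb <| measure_mono_null
    (fun ω hω => tendsto_bot_of_horizon_neg (not_le.1 hω) hnorm hdir) h
  obtain ⟨k, hk⟩ := (hbot.eventually (gt_mem_nhds ha)).exists
  exact hk.not_ge ((hu k).trans (iInf₂_le P hP))

theorem upperSemicontinuous_robustValue [TopologicalSpace E] [FirstCountableTopology E]
    (hprob : ∀ P ∈ 𝔖, IsProbabilityMeasure P) (hc : 0 ≤ c) (hΨc : ∀ ω x, Ψ ω x ≤ c)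
    (hmeas : ∀ x, Measurable fun ω => Ψ ω x) (husc : ∀ ω, UpperSemicontinuous (Ψ ω)) :
    UpperSemicontinuous (robustValue 𝔖 Ψ) :=
  upperSemicontinuous_biInf fun P hP =>
    haveI := hprob P hP
    upperSemicontinuous_eexp P hc hΨc hmeas husc

end Robust

theorem one_period_exists_maximizer_general
    {Ω : Type*} [MeasurableSpace Ω] {d : ℕ}
    (𝔖 : Set (Measure Ω)) (hprob : ∀ P ∈ 𝔖, IsProbabilityMeasure P)
    (Ψ : Ω → Rd d → EReal) (C : ℝ) (hΨ : Assump1P 𝔖 Ψ C)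
    (hNA : {h : Rd d | QuasiSure 𝔖 fun ω => 0 ≤ horizon (Ψ ω) h} = {0}) :
    ∃ hopt : Rd d,
      (⨅ P ∈ 𝔖, eexp P fun ω => Ψ ω hopt) =
        ⨆ h : Rd d, ⨅ P ∈ 𝔖, eexp P fun ω => Ψ ω h := by
  have hc : 0 ≤ max C 0 := le_max_right C 0
  have hΨc : ∀ ω h, Ψ ω h ≤ (max C 0 : ℝ) := fun ω h =>
    (hΨ.bdd ω h).trans (EReal.coe_le_coe_iff.2 (le_max_left C 0))
  have hmeas : ∀ h, Measurable fun ω => Ψ ω h := fun h =>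
    hΨ.meas.comp (measurable_id.prodMk measurable_const)
  have husc := upperSemicontinuous_robustValue hprob hc hΨc hmeas hΨ.usc
  have hbdd := isBounded_superlevel_robustValue hprob hc hΨc hmeas (fun h hh => hNA.subset hh)
    hΨ.zero
  obtain ⟨hopt, hmax⟩ := husc.exists_forall_le_of_isBounded 0 hbdd
  exact ⟨hopt, le_antisymm (le_iSup (robustValue 𝔖 Ψ) hopt) (iSup_le hmax)⟩

/-- Theorem 4.2: existence of an optimizer in the one-period robust optimization problem. -/
theorem one_period_exists_maximizer
    {Ω : Type*} [MeasurableSpace Ω] {d : ℕ} (hd : 1 ≤ d)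
    (𝔖 : Set (Measure Ω)) (hne : 𝔖.Nonempty) (hprob : ∀ P ∈ 𝔖, IsProbabilityMeasure P)
    (Ψ : Ω → Rd d → EReal) (C : ℝ) (hΨ : Assump1P 𝔖 Ψ C)
    (hNA : {h : Rd d | QuasiSure 𝔖 fun ω => 0 ≤ horizon (Ψ ω) h} = {0}) :
    ∃ hopt : Rd d,
      (⨅ P ∈ 𝔖, eexp P fun ω => Ψ ω hopt) =
        ⨆ h : Rd d, ⨅ P ∈ 𝔖, eexp P fun ω => Ψ ω h :=
  one_period_exists_maximizer_general 𝔖 hprob Ψ C hΨ hNA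

end
end

section
/- In the one-period setting, suppose Ψ : Ω × ℝ^d → ℝ ∪ {−∞} satisfies Assumption 4.1 and the no-arbitrage condition K = {0} holds. Then for every h ∈ ℝ^d the following are equivalent: (i) Φ^∞(h) = 0; (ii) Ψ^∞(h) = 0 𝔓-q.s.; (iii) h = 0; where Φ^∞ is the horizon function of Φ(h) := inf_{P∈𝔓} E^P[Ψ(h)]. -/
open MeasureTheory
open scoped ENNReal

noncomputable section

/-!
Since `Ψ ≤ C`, every `Ψ(ω, ·)^∞` is `≤ 0`, so `Ψ^∞(h) = 0` q.s. says `Ψ^∞(h) ≥ 0` q.s., i.e. `h ∈ K = {0}`.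
As `Φ` is bounded above and `Φ(0) > -∞`, `Φ^∞(0) = 0`. If `h ≠ 0`, no-arbitrage yields `P ∈ 𝔖`,
`ε > 0` and a level `n` at which the sup defining `Ψ^∞(h)` is `< -ε` on a set `B` with `P(B) > 0`.
Then `Ψ(δ y) ≤ -δ ε` on `B`, so `E^P[Ψ(δ y)] ≤ C⁺ - δ ε P(B)` for all large `δ` and `y` near `h`,
which gives `Φ^∞(h) ≤ -ε P(B) < 0`.
-/

open Filter Topology

section Horizon

variable {E : Type*} [NormedAddCommGroup E] [NormedSpace ℝ E] {f g : E → EReal} {x : E}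

def horizonAt (f : E → EReal) (x : E) (n : ℕ) : EReal :=
  ⨆ (δ : ℝ) (_ : ((n : ℝ) + 1) < δ) (y : E) (_ : ‖x - y‖ < 1 / ((n : ℝ) + 1)),
    ((δ⁻¹ : ℝ) : EReal) * f (δ • y)

theorem horizon_eq_iInf_horizonAt (f : E → EReal) (x : E) :
    horizon f x = ⨅ n, horizonAt f x n :=
  rfl

theorem inv_mul_le_horizonAt {n : ℕ} {δ : ℝ} {y : E} (hδ : (n : ℝ) + 1 < δ)
    (hy : ‖x - y‖ < 1 / ((n : ℝ) + 1)) :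
    ((δ⁻¹ : ℝ) : EReal) * f (δ • y) ≤ horizonAt f x n :=
  le_iSup₂_of_le δ hδ <| le_iSup₂_of_le (f := fun y _ => ((δ⁻¹ : ℝ) : EReal) * f (δ • y)) y hy le_rfl

theorem horizonAt_le {n : ℕ} {a : EReal}
    (h : ∀ δ : ℝ, (n : ℝ) + 1 < δ → ∀ y : E, ‖x - y‖ < 1 / ((n : ℝ) + 1) →
      ((δ⁻¹ : ℝ) : EReal) * f (δ • y) ≤ a) :
    horizonAt f x n ≤ a :=
  iSup₂_le fun δ hδ => iSup₂_le fun y hy => h δ hδ y hy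

theorem horizon_mono (hfg : ∀ y, f y ≤ g y) (x : E) : horizon f x ≤ horizon g x :=
  iInf_mono fun n => iSup₂_mono fun _ hδ => iSup₂_mono fun _ _ =>
    mul_le_mul_of_nonneg_left (hfg _)
      (EReal.coe_nonneg.2 (inv_nonneg.2 ((Nat.cast_add_one_pos n).trans hδ).le))

theorem horizon_le_of_le_sub_mul {c b : ℝ} (n₀ : ℕ)
    (hf : ∀ δ : ℝ, (n₀ : ℝ) + 1 < δ → ∀ y : E, ‖x - y‖ < 1 / ((n₀ : ℝ) + 1) →
      f (δ • y) ≤ ((c - δ * b : ℝ) : EReal)) :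
    horizon f x ≤ ((-b : ℝ) : EReal) := by
  have hle : ∀ m ≥ n₀, horizon f x ≤ ((max c 0 * (1 / ((m : ℝ) + 1)) - b : ℝ) : EReal) := by
    intro m hm
    have hm' : (n₀ : ℝ) + 1 ≤ (m : ℝ) + 1 := by exact_mod_cast Nat.add_le_add_right hm 1
    refine (iInf_le _ m).trans (horizonAt_le fun δ hδ y hy => ?_)
    have hδ₀ : 0 < δ := (Nat.cast_add_one_pos m).trans hδ
    have hfδ := hf δ (hm'.trans_lt hδ) y (hy.trans_le (by gcongr))
    calc ((δ⁻¹ : ℝ) : EReal) * f (δ • y) ≤ ((δ⁻¹ : ℝ) : EReal) * ((c - δ * b : ℝ) : EReal) :=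
          mul_le_mul_of_nonneg_left hfδ (EReal.coe_nonneg.2 (inv_nonneg.2 hδ₀.le))
      _ = ((c * δ⁻¹ - b : ℝ) : EReal) := by
          rw [← EReal.coe_mul]
          congr 1
          field_simp
      _ ≤ _ := by
          rw [EReal.coe_le_coe_iff, one_div]
          gcongr
          exact le_max_left c 0
  have hlim : Tendsto (fun m : ℕ => ((max c 0 * (1 / ((m : ℝ) + 1)) - b : ℝ) : EReal)) atTop
      (𝓝 ((-b : ℝ) : EReal)) := by
    refine (EReal.continuous_coe_iff.2 continuous_id).continuousAt.tendsto.comp ?_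
    simpa using (tendsto_one_div_add_atTop_nhds_zero_nat.const_mul (max c 0)).sub_const b
  exact ge_of_tendsto hlim (eventually_atTop.2 ⟨n₀, hle⟩)

theorem horizon_nonpos_of_le {c : ℝ} (hf : ∀ y, f y ≤ c) (x : E) : horizon f x ≤ 0 := by
  simpa using horizon_le_of_le_sub_mul (x := x) (b := 0) 0 fun δ _ y _ => by simpa using hf (δ • y)

theorem horizon_zero_nonneg (hf : ⊥ < f 0) : 0 ≤ horizon f 0 := by
  obtain ⟨r, -, hr⟩ := EReal.lt_iff_exists_real_btwn.1 hf
  refine le_iInf fun n => ?_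
  have hlim : Tendsto (fun δ : ℝ => ((δ⁻¹ * r : ℝ) : EReal)) atTop (𝓝 0) := by
    refine (EReal.continuous_coe_iff.2 continuous_id).continuousAt.tendsto.comp ?_
    simpa using tendsto_inv_atTop_zero.mul_const r
  refine le_of_tendsto hlim ((eventually_gt_atTop ((n : ℝ) + 1)).mono fun δ hδ => ?_)
  have hδ₀ : 0 < δ := (Nat.cast_add_one_pos n).trans hδ
  calc ((δ⁻¹ * r : ℝ) : EReal) ≤ ((δ⁻¹ : ℝ) : EReal) * f (δ • 0) := by
        rw [EReal.coe_mul, smul_zero]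
        exact mul_le_mul_of_nonneg_left hr.le (EReal.coe_nonneg.2 (inv_nonneg.2 hδ₀.le))
    _ ≤ horizonAt f 0 n := inv_mul_le_horizonAt hδ (by simp; positivity)

end Horizon

section Expectation

variable {X : Type*} [MeasurableSpace X] {P : Measure X} {g : X → EReal}

theorem exists_pos_measure_setOf_lt_neg (hg : P {x | g x < 0} ≠ 0) :
    ∃ ε : ℝ, 0 < ε ∧ P {x | g x < ((-ε : ℝ) : EReal)} ≠ 0 := by
  by_contra! hnull
  have hcover : {x | g x < 0} ⊆ ⋃ k : ℕ, {x | g x < ((-(1 / ((k : ℝ) + 1)) : ℝ) : EReal)} := by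
    intro x hx
    obtain ⟨r, hgr, hr⟩ := EReal.lt_iff_exists_real_btwn.1 hx
    obtain ⟨k, hk⟩ := exists_nat_one_div_lt (neg_pos.2 (EReal.coe_lt_coe_iff.1 hr))
    exact Set.mem_iUnion.2 ⟨k, hgr.trans (EReal.coe_lt_coe_iff.2 (by linarith))⟩
  exact hg (measure_mono_null hcover (measure_iUnion_null fun k => hnull _ (by positivity)))

theorem lintegral_toENNReal_le [IsProbabilityMeasure P] {c : ℝ} (hg : ∀ x, g x ≤ c) :
    ∫⁻ x, (g x).toENNReal ∂P ≤ ENNReal.ofReal c :=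
  calc ∫⁻ x, (g x).toENNReal ∂P ≤ ∫⁻ _, ENNReal.ofReal c ∂P :=
        lintegral_mono fun x => EReal.toENNReal_le_toENNReal (hg x)
    _ = ENNReal.ofReal c := by simp

theorem ofReal_mul_measure_le_lintegral_neg {A : Set X} {a : ℝ} (hg : Measurable g)
    (hA : ∀ x ∈ A, g x ≤ ((-a : ℝ) : EReal)) :
    ENNReal.ofReal a * P A ≤ ∫⁻ x, (-g x).toENNReal ∂P := by
  refine (mul_le_mul_right (measure_mono fun x hx => ?_) _).trans
    (mul_meas_ge_le_lintegral₀ (measurable_ereal_toENNReal.comp hg.neg).aemeasurable _)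
  exact EReal.toENNReal_le_toENNReal (EReal.le_neg.2 (EReal.coe_neg a ▸ hA x hx))

theorem eexp_le_max [IsProbabilityMeasure P] {c : ℝ} (hg : ∀ x, g x ≤ c) :
    eexp P g ≤ ((max c 0 : ℝ) : EReal) := by
  rw [← EReal.coe_ennreal_ofReal, ← sub_zero ((ENNReal.ofReal c : ℝ≥0∞) : EReal)]
  exact EReal.sub_le_sub (EReal.coe_ennreal_le_coe_ennreal_iff.2 (lintegral_toENNReal_le hg))
    (EReal.coe_ennreal_nonneg _)

theorem eexp_le_max_sub [IsProbabilityMeasure P] {c a : ℝ} {A : Set X} (hg : ∀ x, g x ≤ c)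
    (hmeas : Measurable g) (hA : ∀ x ∈ A, g x ≤ ((-a : ℝ) : EReal)) (ha : 0 ≤ a) :
    eexp P g ≤ ((max c 0 - a * (P A).toReal : ℝ) : EReal) := by
  have hPA : ENNReal.ofReal a * P A = ENNReal.ofReal (a * (P A).toReal) := by
    rw [ENNReal.ofReal_mul ha, ENNReal.ofReal_toReal (measure_ne_top P A)]
  calc eexp P g ≤ ((ENNReal.ofReal c : ℝ≥0∞) : EReal) - ((ENNReal.ofReal a * P A : ℝ≥0∞) : EReal) :=
        EReal.sub_le_sub (EReal.coe_ennreal_le_coe_ennreal_iff.2 (lintegral_toENNReal_le hg))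
          (EReal.coe_ennreal_le_coe_ennreal_iff.2 (ofReal_mul_measure_le_lintegral_neg hmeas hA))
    _ = _ := by
        rw [hPA, EReal.coe_ennreal_ofReal, EReal.coe_ennreal_ofReal,
          max_eq_left (by positivity : 0 ≤ a * (P A).toReal), ← EReal.coe_sub]

end Expectation

theorem EReal.le_coe_mul_of_inv_mul_le {z : EReal} {δ a : ℝ} (hδ : 0 < δ)
    (h : ((δ⁻¹ : ℝ) : EReal) * z ≤ a) : z ≤ ((δ * a : ℝ) : EReal) :=
  calc z = (δ : EReal) * (((δ⁻¹ : ℝ) : EReal) * z) := by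
        rw [← mul_assoc, ← EReal.coe_mul, mul_inv_cancel₀ hδ.ne', EReal.coe_one, one_mul]
    _ ≤ (δ : EReal) * a := mul_le_mul_of_nonneg_left h (EReal.coe_nonneg.2 hδ.le)
    _ = ((δ * a : ℝ) : EReal) := (EReal.coe_mul δ a).symm

theorem horizon_eexp_neg {Ω E : Type*} [MeasurableSpace Ω] [NormedAddCommGroup E]
    [NormedSpace ℝ E] {P : Measure Ω} [IsProbabilityMeasure P] {Ψ : Ω → E → EReal} {C : ℝ}
    (hmeas : ∀ x, Measurable fun ω => Ψ ω x) (hbdd : ∀ ω x, Ψ ω x ≤ C) {h : E}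
    (hP : P {ω | horizon (Ψ ω) h < 0} ≠ 0) :
    horizon (fun x => eexp P fun ω => Ψ ω x) h < 0 := by
  obtain ⟨ε, hε, hPε⟩ := exists_pos_measure_setOf_lt_neg hP
  obtain ⟨n, hn⟩ : ∃ n, 0 < P {ω | horizonAt (Ψ ω) h n < ((-ε : ℝ) : EReal)} := by
    refine exists_measure_pos_of_not_measure_iUnion_null ?_
    simpa only [horizon_eq_iInf_horizonAt, iInf_lt_iff, Set.ofPred_exists] using hPε
  set B := {ω | horizonAt (Ψ ω) h n < ((-ε : ℝ) : EReal)}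
  have hB : 0 < (P B).toReal := ENNReal.toReal_pos hn.ne' (measure_ne_top P B)
  refine (horizon_le_of_le_sub_mul (c := max C 0) (b := ε * (P B).toReal) n
    fun δ hδ y hy => ?_).trans_lt (EReal.coe_lt_coe_iff.2 (neg_neg_of_pos (by positivity)))
  have hδ₀ : 0 < δ := (Nat.cast_add_one_pos n).trans hδ
  have hdecay : ∀ ω ∈ B, Ψ ω (δ • y) ≤ ((-(δ * ε) : ℝ) : EReal) := fun ω hω => by
    simpa using EReal.le_coe_mul_of_inv_mul_le hδ₀ ((inv_mul_le_horizonAt hδ hy).trans hω.le)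
  simpa [mul_assoc] using eexp_le_max_sub (fun ω => hbdd ω (δ • y)) (hmeas _) hdecay (by positivity)

theorem quasiSure_congr {X : Type*} [MeasurableSpace X] {𝔖 : Set (Measure X)} {p q : X → Prop}
    (hpq : ∀ x, p x ↔ q x) : QuasiSure 𝔖 p ↔ QuasiSure 𝔖 q := by
  simp only [QuasiSure, hpq]

theorem one_period_horizon_zero_iff_general
    {Ω : Type*} [MeasurableSpace Ω] {d : ℕ}
    (𝔖 : Set (Measure Ω)) (hne : 𝔖.Nonempty) (hprob : ∀ P ∈ 𝔖, IsProbabilityMeasure P)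
    (Ψ : Ω → Rd d → EReal) (C : ℝ) (hΨ : Assump1P 𝔖 Ψ C)
    (hNA : {h : Rd d | QuasiSure 𝔖 fun ω => 0 ≤ horizon (Ψ ω) h} = {0}) :
    ∀ h : Rd d,
      (horizon (fun h' : Rd d => ⨅ P ∈ 𝔖, eexp P fun ω => Ψ ω h') h = 0 ↔
        QuasiSure 𝔖 fun ω => horizon (Ψ ω) h = 0) ∧
      ((QuasiSure 𝔖 fun ω => horizon (Ψ ω) h = 0) ↔ h = 0) := by
  intro h
  have hK : ∀ x, (QuasiSure 𝔖 fun ω => horizon (Ψ ω) x = 0) ↔ x = 0 := fun x => by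
    rw [← Set.mem_singleton_iff, ← hNA, Set.mem_ofPred_eq]
    exact quasiSure_congr fun ω => (horizon_nonpos_of_le (hΨ.bdd ω) x).ge_iff_eq.symm
  have hΦ_neg : ∀ x ≠ 0, horizon (fun h' : Rd d => ⨅ P ∈ 𝔖, eexp P fun ω => Ψ ω h') x < 0 := by
    intro x hx
    obtain ⟨P, hP, hPx⟩ : ∃ P ∈ 𝔖, P {ω | horizon (Ψ ω) x < 0} ≠ 0 := by
      have hxK : x ∉ {h : Rd d | QuasiSure 𝔖 fun ω => 0 ≤ horizon (Ψ ω) h} := hNA ▸ hx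
      simpa [QuasiSure, IsPolar] using hxK
    have := hprob P hP
    exact (horizon_mono (fun y => iInf₂_le P hP) x).trans_lt
      (horizon_eexp_neg (fun y => hΨ.meas.comp measurable_prodMk_right) hΨ.bdd hPx)
  refine ⟨?_, hK h⟩
  rw [hK h]
  obtain ⟨P₀, hP₀⟩ := hne
  have := hprob P₀ hP₀
  rcases eq_or_ne h 0 with rfl | hh
  · exact iff_of_true (le_antisymm
      (horizon_nonpos_of_le (fun x => (iInf₂_le P₀ hP₀).trans (eexp_le_max (hΨ.bdd · x))) 0)
      (horizon_zero_nonneg hΨ.zero)) rfl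
  · exact iff_of_false (hΦ_neg h hh).ne hh

/-- Lemma 4.4, second part: under no-arbitrage, `Φ^∞(h) = 0` iff `Ψ^∞(h) = 0` `𝔖`-q.s.
iff `h = 0`. -/
theorem one_period_horizon_zero_iff
    {Ω : Type*} [MeasurableSpace Ω] {d : ℕ} (hd : 1 ≤ d)
    (𝔖 : Set (Measure Ω)) (hne : 𝔖.Nonempty) (hprob : ∀ P ∈ 𝔖, IsProbabilityMeasure P)
    (Ψ : Ω → Rd d → EReal) (C : ℝ) (hΨ : Assump1P 𝔖 Ψ C)
    (hNA : {h : Rd d | QuasiSure 𝔖 fun ω => 0 ≤ horizon (Ψ ω) h} = {0}) :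
    ∀ h : Rd d,
      (horizon (fun h' : Rd d => ⨅ P ∈ 𝔖, eexp P fun ω => Ψ ω h') h = 0 ↔
        QuasiSure 𝔖 fun ω => horizon (Ψ ω) h = 0) ∧
      ((QuasiSure 𝔖 fun ω => horizon (Ψ ω) h = 0) ↔ h = 0) :=
  one_period_horizon_zero_iff_general 𝔖 hne hprob Ψ C hΨ hNA

end
end

section
/- Let f : ℝ^m × ℝ^n → ℝ ∪ {−∞} be proper and upper semicontinuous, and assume {x ∈ ℝ^n : f^∞(0,x) ≥ 0} = {0}, where f^∞ is the horizon function of f on ℝ^{m+n}. Then the function p(u) := sup_{x∈ℝ^n} f(u,x) is proper and upper semicontinuous; for each u ∈ dom p there exists x(u) ∈ ℝ^n with f(u, x(u)) = p(u); moreover p^∞(u) = sup_{x∈ℝ^n} f^∞(u,x) for all u ∈ ℝ^m, and this supremum is attained whenever u ∈ dom p^∞. -/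
open scoped ENNReal

noncomputable section

/-! The horizon condition makes `f` level-bounded in `x` at linear scale: if `‖u‖ ≤ t R` and
`f (u, x) ≥ t B` with `t ≥ 1`, then `‖x‖ ≤ C t`, since otherwise the directions `x / ‖x‖` of a
violating sequence accumulate at a unit vector `x̄` with `f^∞(0, x̄) ≥ 0`. At scale `t = 1` this
makes maximizing sequences bounded, so upper semicontinuity of `f` gives attainment of `p(u)` and
upper semicontinuity of `p`. Along a sequence `δ_k → ∞`, `y_k → u` realizing `p^∞(u)`, the
maximizers `x_k` of `f (δ_k y_k, ·)` satisfy `‖x_k‖ ≤ C δ_k`, and a limit point `x̄` of `x_k / δ_k`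
gives `p^∞(u) ≤ f^∞(u, x̄)`; the reverse inequality is monotonicity of the horizon function. -/

open Filter Topology

theorem EReal.coe_le_coe_inv_mul_iff {t b : ℝ} (ht : 0 < t) {a : EReal} :
    (b : EReal) ≤ ((t⁻¹ : ℝ) : EReal) * a ↔ ((t * b : ℝ) : EReal) ≤ a := by
  constructor
  · intro h
    calc ((t * b : ℝ) : EReal) = t * b := EReal.coe_mul _ _
      _ ≤ t * (((t⁻¹ : ℝ) : EReal) * a) := mul_le_mul_of_nonneg_left h (EReal.coe_nonneg.2 ht.le)
      _ = a := by rw [← mul_assoc, ← EReal.coe_mul, mul_inv_cancel₀ ht.ne', EReal.coe_one, one_mul]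
  · intro h
    calc (b : EReal) = ((t⁻¹ : ℝ) : EReal) * ((t * b : ℝ) : EReal) := by
          rw [← EReal.coe_mul, inv_mul_cancel_left₀ ht.ne']
      _ ≤ _ := mul_le_mul_of_nonneg_left h (EReal.coe_nonneg.2 (inv_nonneg.2 ht.le))

section Horizon

variable {E : Type*} [NormedAddCommGroup E] [NormedSpace ℝ E]

theorem limsup_le_horizon {ι : Type*} {l : Filter ι} (g : E → EReal) {x : E} {δ : ι → ℝ}
    {y : ι → E} (hδ : Tendsto δ l atTop) (hy : Tendsto y l (𝓝 x)) :
    limsup (fun i => ((δ i)⁻¹ : ℝ) * g (δ i • y i)) l ≤ horizon g x := by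
  refine le_iInf fun n => limsup_le_of_le (by isBoundedDefault) ?_
  have hball : ∀ᶠ i in l, ‖x - y i‖ < 1 / ((n : ℝ) + 1) := by
    simpa only [Metric.mem_ball, dist_eq_norm'] using
      hy.eventually (Metric.ball_mem_nhds x (by positivity : (0 : ℝ) < 1 / ((n : ℝ) + 1)))
  filter_upwards [hδ.eventually_gt_atTop ((n : ℝ) + 1), hball] with i hδi hyi
  exact le_iSup₂_of_le (δ i) hδi (le_iSup₂_of_le (y i) hyi le_rfl)

theorem le_horizon_of_le_liminf {ι : Type*} {l : Filter ι} [l.NeBot] (g : E → EReal) {x : E}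
    {δ : ι → ℝ} {y : ι → E} {c : EReal} (hδ : Tendsto δ l atTop) (hy : Tendsto y l (𝓝 x))
    (hc : c ≤ liminf (fun i => ((δ i)⁻¹ : ℝ) * g (δ i • y i)) l) : c ≤ horizon g x :=
  hc.trans ((liminf_le_limsup).trans (limsup_le_horizon g hδ hy))

theorem exists_seq_tendsto_horizon (g : E → EReal) (x : E) :
    ∃ (δ : ℕ → ℝ) (y : ℕ → E), Tendsto δ atTop atTop ∧ Tendsto y atTop (𝓝 x) ∧
      Tendsto (fun k => ((δ k)⁻¹ : ℝ) * g (δ k • y k)) atTop (𝓝 (horizon g x)) := by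
  suffices ∃ (δ : ℕ → ℝ) (y : ℕ → E), Tendsto δ atTop atTop ∧ Tendsto y atTop (𝓝 x) ∧
      horizon g x ≤ liminf (fun k => ((δ k)⁻¹ : ℝ) * g (δ k • y k)) atTop by
    obtain ⟨δ, y, hδ, hy, hle⟩ := this
    exact ⟨δ, y, hδ, hy, tendsto_of_le_liminf_of_limsup_le hle (limsup_le_horizon g hδ hy)⟩
  rcases eq_or_ne (horizon g x) ⊥ with hbot | hne
  · exact ⟨(↑), fun _ => x, tendsto_natCast_atTop_atTop, tendsto_const_nhds, hbot ▸ bot_le⟩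
  obtain ⟨b, -, hb, hbc⟩ := exists_seq_strictMono_tendsto' (bot_lt_iff_ne_bot.2 hne)
  have hexists : ∀ k : ℕ, ∃ δ : ℝ, ((k : ℝ) + 1) < δ ∧ ∃ y : E, ‖x - y‖ < 1 / ((k : ℝ) + 1) ∧
      b k < ((δ⁻¹ : ℝ) : EReal) * g (δ • y) := by
    intro k
    simpa only [lt_iSup_iff, exists_prop] using (hb k).2.trans_le (iInf_le _ k)
  choose δ hδ y hy hv using hexists
  have hyx : Tendsto y atTop (𝓝 x) := by
    rw [tendsto_iff_norm_sub_tendsto_zero]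
    refine squeeze_zero (fun _ => norm_nonneg _) (fun k => ?_)
      tendsto_one_div_add_atTop_nhds_zero_nat
    rw [norm_sub_rev]
    exact (hy k).le
  refine ⟨δ, y, tendsto_atTop_mono (fun k => (lt_add_one _).le.trans (hδ k).le)
    tendsto_natCast_atTop_atTop, hyx, ?_⟩
  rw [← hbc.liminf_eq]
  exact liminf_le_liminf (.of_forall fun k => (hv k).le)

theorem horizon_le_horizon_iSup {F : Type*} [NormedAddCommGroup F] [NormedSpace ℝ F]
    (f : E × F → EReal) (u : E) (x : F) :
    horizon f (u, x) ≤ horizon (fun u' => ⨆ x', f (u', x')) u := by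
  obtain ⟨δ, z, hδ, hz, hv⟩ := exists_seq_tendsto_horizon f (u, x)
  have hle : ∀ k, f (δ k • z k) ≤ ⨆ x', f (δ k • (z k).1, x') := fun k =>
    le_iSup (fun x' => f (δ k • (z k).1, x')) (δ k • (z k).2)
  calc horizon f (u, x) = limsup (fun k => ((δ k)⁻¹ : ℝ) * f (δ k • z k)) atTop :=
        hv.limsup_eq.symm
    _ ≤ limsup (fun k => ((δ k)⁻¹ : ℝ) * ⨆ x', f (δ k • (z k).1, x')) atTop :=
      limsup_le_limsup ((hδ.eventually_ge_atTop 0).mono fun k hk =>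
        mul_le_mul_of_nonneg_left (hle k) (EReal.coe_nonneg.2 (inv_nonneg.2 hk)))
    _ ≤ horizon (fun u' => ⨆ x', f (u', x')) u :=
      limsup_le_horizon (fun u' => ⨆ x', f (u', x')) (y := fun k => (z k).1) hδ hz.fst_nhds

end Horizon

section HorizonCondition

variable {E F : Type*} [NormedAddCommGroup E] [NormedSpace ℝ E]
  [NormedAddCommGroup F] [NormedSpace ℝ F] [ProperSpace F] {f : E × F → EReal}

theorem exists_norm_eq_one_zero_le_horizon {u : ℕ → E} {x : ℕ → F} (hx0 : ∀ k, x k ≠ 0)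
    (hx : Tendsto (fun k => ‖x k‖) atTop atTop)
    (hu : Tendsto (fun k => ‖x k‖⁻¹ • u k) atTop (𝓝 0))
    (hf : 0 ≤ liminf (fun k => ((‖x k‖⁻¹ : ℝ) : EReal) * f (u k, x k)) atTop) :
    ∃ x₀ : F, ‖x₀‖ = 1 ∧ 0 ≤ horizon f ((0 : E), x₀) := by
  obtain ⟨x₀, hx₀, φ, hφ, hw⟩ := (isCompact_sphere (0 : F) 1).tendsto_subseq
    (x := fun k => ‖x k‖⁻¹ • x k) fun k => by simp [norm_smul, hx0 k]
  have hsmul : ∀ k, ‖x k‖ • (‖x k‖⁻¹ • u k, ‖x k‖⁻¹ • x k) = (u k, x k) := fun k => by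
    rw [Prod.smul_mk, smul_inv_smul₀ (norm_ne_zero_iff.2 (hx0 k)),
      smul_inv_smul₀ (norm_ne_zero_iff.2 (hx0 k))]
  refine ⟨x₀, mem_sphere_zero_iff_norm.1 hx₀, le_horizon_of_le_liminf (l := map φ atTop) f
    (y := fun k => (‖x k‖⁻¹ • u k, ‖x k‖⁻¹ • x k)) (hx.mono_left hφ.tendsto_atTop)
    ((hu.mono_left hφ.tendsto_atTop).prodMk_nhds (tendsto_map'_iff.2 hw)) ?_⟩
  simp only [hsmul]
  exact hf.trans (liminf_le_liminf_of_le hφ.tendsto_atTop)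

theorem exists_linear_level_bound (hK : ∀ x : F, 0 ≤ horizon f ((0 : E), x) → x = 0)
    (R B : ℝ) : ∃ C : ℝ, ∀ t : ℝ, 1 ≤ t → ∀ u x, ‖u‖ ≤ t * R →
      ((t * B : ℝ) : EReal) ≤ f (u, x) → ‖x‖ ≤ C * t := by
  by_contra! h
  choose t ht u x hu hB hx using fun k : ℕ => h ((k : ℝ) + 1)
  have hks : ∀ k : ℕ, (k : ℝ) + 1 ≤ ‖x k‖ := fun k =>
    (le_mul_of_one_le_right (by positivity) (ht k)).trans (hx k).le
  have hpos : ∀ k, 0 < ‖x k‖ := fun k => lt_of_lt_of_le (by positivity) (hks k)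
  have hts : Tendsto (fun k => t k / ‖x k‖) atTop (𝓝 0) := by
    refine squeeze_zero (fun k => (div_pos (by linarith [ht k]) (hpos k)).le) (fun k => ?_)
      tendsto_one_div_add_atTop_nhds_zero_nat
    rw [div_le_div_iff₀ (hpos k) (by positivity)]
    linarith [hx k]
  have hu0 : Tendsto (fun k => ‖x k‖⁻¹ • u k) atTop (𝓝 0) := by
    refine squeeze_zero_norm (fun k => ?_) (by simpa using hts.mul_const R)
    calc ‖‖x k‖⁻¹ • u k‖ = ‖x k‖⁻¹ * ‖u k‖ := by
          rw [norm_smul, norm_inv, norm_norm]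
      _ ≤ ‖x k‖⁻¹ * (t k * R) := by gcongr; exact hu k
      _ = t k / ‖x k‖ * R := by ring
  have hfB : ∀ k, ((t k / ‖x k‖ * B : ℝ) : EReal) ≤ ((‖x k‖⁻¹ : ℝ) : EReal) * f (u k, x k) :=
    fun k => (EReal.coe_le_coe_inv_mul_iff (hpos k)).2 <| by
      rw [show ‖x k‖ * (t k / ‖x k‖ * B) = t k * B by field_simp [(hpos k).ne']]
      exact hB k
  have hf : 0 ≤ liminf (fun k => ((‖x k‖⁻¹ : ℝ) : EReal) * f (u k, x k)) atTop := by
    have hlim : Tendsto (fun k => ((t k / ‖x k‖ * B : ℝ) : EReal)) atTop (𝓝 0) := by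
      simpa using EReal.tendsto_coe.2 (hts.mul_const B)
    calc (0 : EReal) = liminf (fun k => ((t k / ‖x k‖ * B : ℝ) : EReal)) atTop :=
          hlim.liminf_eq.symm
      _ ≤ _ := liminf_le_liminf (.of_forall hfB)
  obtain ⟨x₀, hx₀, h0⟩ := exists_norm_eq_one_zero_le_horizon (fun k => norm_pos_iff.1 (hpos k))
    (tendsto_atTop_mono hks (tendsto_atTop_add_const_right _ 1 tendsto_natCast_atTop_atTop)) hu0 hf
  exact one_ne_zero (hx₀ ▸ norm_eq_zero.2 (hK x₀ h0))

theorem exists_le_apply_of_le_liminf (hK : ∀ x : F, 0 ≤ horizon f ((0 : E), x) → x = 0)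
    (husc : UpperSemicontinuous f) {u : ℕ → E} {u₀ : E} {x : ℕ → F} {c : EReal}
    (hu : Tendsto u atTop (𝓝 u₀)) (hc₀ : c ≠ ⊥)
    (hc : c ≤ liminf (fun k => f (u k, x k)) atTop) : ∃ x₀, c ≤ f (u₀, x₀) := by
  obtain ⟨B, -, hBc⟩ := EReal.exists_between_coe_real (bot_lt_iff_ne_bot.2 hc₀)
  obtain ⟨C, hC⟩ := exists_linear_level_bound hK (‖u₀‖ + 1) B
  have hbdd : ∀ᶠ k in atTop, x k ∈ Metric.closedBall 0 C := by
    filter_upwards [hu.norm.eventually (eventually_lt_nhds (lt_add_one ‖u₀‖)),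
      eventually_lt_of_lt_liminf (hBc.trans_le hc)] with k hk hB
    simpa using hC 1 le_rfl (u k) (x k) (by simpa using hk.le) (by simpa using hB.le)
  obtain ⟨x₀, -, φ, hφ, hx⟩ :=
    tendsto_subseq_of_frequently_bounded Metric.isBounded_closedBall hbdd.frequently
  refine ⟨x₀, ?_⟩
  calc c ≤ liminf (fun k => f (u k, x k)) (map φ atTop) :=
        hc.trans (liminf_le_liminf_of_le hφ.tendsto_atTop)
    _ ≤ limsup (fun k => f (u k, x k)) (map φ atTop) := liminf_le_limsup
    _ ≤ limsup f (𝓝 (u₀, x₀)) := by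
        rw [← Function.comp_def, limsup_comp]
        exact limsup_le_limsup_of_le
          ((hu.mono_left hφ.tendsto_atTop).prodMk_nhds (tendsto_map'_iff.2 hx))
    _ ≤ f (u₀, x₀) := UpperSemicontinuousAt.limsup_le (husc _)

theorem exists_apply_eq_iSup (hK : ∀ x : F, 0 ≤ horizon f ((0 : E), x) → x = 0)
    (husc : UpperSemicontinuous f) (u : E) : ∃ x₀, f (u, x₀) = ⨆ x, f (u, x) := by
  rcases eq_or_ne (⨆ x, f (u, x)) ⊥ with hbot | hne
  · exact ⟨0, le_antisymm (le_iSup (fun x => f (u, x)) 0) (hbot ▸ bot_le)⟩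
  obtain ⟨v, -, hv, hvS⟩ :=
    exists_seq_tendsto_sSup (Set.range_nonempty fun x => f (u, x)) (OrderTop.bddAbove _)
  choose x hx using hvS
  rw [sSup_range, ← funext hx] at hv
  obtain ⟨x₀, hx₀⟩ :=
    exists_le_apply_of_le_liminf hK husc tendsto_const_nhds hne hv.liminf_eq.ge
  exact ⟨x₀, le_antisymm (le_iSup (fun x => f (u, x)) x₀) hx₀⟩

theorem iSup_ne_top_of_forall_ne_top (hnt : ∀ z, f z ≠ ⊤)
    (hK : ∀ x : F, 0 ≤ horizon f ((0 : E), x) → x = 0)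
    (husc : UpperSemicontinuous f) (u : E) : ⨆ x, f (u, x) ≠ ⊤ := by
  obtain ⟨x₀, hx₀⟩ := exists_apply_eq_iSup hK husc u
  exact hx₀ ▸ hnt _

theorem upperSemicontinuous_iSup (hK : ∀ x : F, 0 ≤ horizon f ((0 : E), x) → x = 0)
    (husc : UpperSemicontinuous f) : UpperSemicontinuous fun u => ⨆ x, f (u, x) := by
  intro u M hM
  by_contra h
  obtain ⟨us, hus, hM'⟩ := frequently_iff_seq_forall.1 (not_eventually.1 h)
  choose x hx using fun k => exists_apply_eq_iSup hK husc (us k)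
  have hMx : ∀ k, M ≤ f (us k, x k) := fun k => (hx k).symm ▸ not_lt.1 (hM' k)
  obtain ⟨x₀, hx₀⟩ := exists_le_apply_of_le_liminf hK husc hus (ne_bot_of_gt hM)
    (le_liminf_of_le (by isBoundedDefault) (.of_forall hMx))
  exact (hx₀.trans (le_iSup (fun x => f (u, x)) x₀)).not_gt hM

theorem exists_horizon_iSup_le (hK : ∀ x : F, 0 ≤ horizon f ((0 : E), x) → x = 0)
    (husc : UpperSemicontinuous f) {u : E}
    (hne : horizon (fun u' => ⨆ x, f (u', x)) u ≠ ⊥) :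
    ∃ x₀, horizon (fun u' => ⨆ x, f (u', x)) u ≤ horizon f (u, x₀) := by
  set p : E → EReal := fun u' => ⨆ x, f (u', x)
  obtain ⟨δ, y, hδ, hy, hv⟩ := exists_seq_tendsto_horizon p u
  choose x hx using fun k => exists_apply_eq_iSup hK husc (δ k • y k)
  obtain ⟨B, -, hB⟩ := EReal.exists_between_coe_real (bot_lt_iff_ne_bot.2 hne)
  obtain ⟨C, hC⟩ := exists_linear_level_bound hK (‖u‖ + 1) B
  have hbdd : ∀ᶠ k in atTop, (δ k)⁻¹ • x k ∈ Metric.closedBall 0 C := by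
    filter_upwards [hδ.eventually_ge_atTop 1, hy.norm.eventually (eventually_lt_nhds
      (lt_add_one ‖u‖)), hv.eventually (eventually_gt_nhds hB)] with k hδk hyk hBk
    have hδpos : 0 < δ k := zero_lt_one.trans_le hδk
    have hxk := hC (δ k) hδk (δ k • y k) (x k)
      (by rw [norm_smul, Real.norm_of_nonneg hδpos.le]; gcongr)
      (((EReal.coe_le_coe_inv_mul_iff hδpos).1 hBk.le).trans_eq (hx k).symm)
    rw [mem_closedBall_zero_iff, norm_smul, norm_inv, Real.norm_of_nonneg hδpos.le,
      inv_mul_le_iff₀ hδpos, mul_comm]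
    exact hxk
  obtain ⟨x₀, -, φ, hφ, hx₀⟩ :=
    tendsto_subseq_of_frequently_bounded Metric.isBounded_closedBall hbdd.frequently
  have hφ' := hφ.tendsto_atTop
  refine ⟨x₀, le_horizon_of_le_liminf (l := map φ atTop) f
    (y := fun k => (y k, (δ k)⁻¹ • x k)) (hδ.mono_left hφ')
    ((hy.mono_left hφ').prodMk_nhds (tendsto_map'_iff.2 hx₀)) ?_⟩
  have hsmul : ∀ᶠ k in map φ atTop, ((δ k)⁻¹ : ℝ) * p (δ k • y k) =
      ((δ k)⁻¹ : ℝ) * f (δ k • (y k, (δ k)⁻¹ • x k)) := by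
    filter_upwards [(hδ.mono_left hφ').eventually_gt_atTop 0] with k hk
    rw [Prod.smul_mk, smul_inv_smul₀ hk.ne', hx k]
  rw [← (hv.mono_left hφ').liminf_eq]
  exact (liminf_congr hsmul).le

theorem horizon_iSup_eq_iSup_horizon (hK : ∀ x : F, 0 ≤ horizon f ((0 : E), x) → x = 0)
    (husc : UpperSemicontinuous f) (u : E) :
    horizon (fun u' => ⨆ x, f (u', x)) u = ⨆ x, horizon f (u, x) := by
  refine le_antisymm ?_ (iSup_le (horizon_le_horizon_iSup f u))
  rcases eq_or_ne (horizon (fun u' => ⨆ x, f (u', x)) u) ⊥ with hbot | hne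
  · exact hbot ▸ bot_le
  obtain ⟨x₀, hx₀⟩ := exists_horizon_iSup_le hK husc hne
  exact le_iSup_of_le x₀ hx₀

theorem exists_horizon_eq_iSup_horizon (hK : ∀ x : F, 0 ≤ horizon f ((0 : E), x) → x = 0)
    (husc : UpperSemicontinuous f) {u : E}
    (hne : horizon (fun u' => ⨆ x, f (u', x)) u ≠ ⊥) :
    ∃ x₀, horizon f (u, x₀) = ⨆ x, horizon f (u, x) := by
  obtain ⟨x₀, hx₀⟩ := exists_horizon_iSup_le hK husc hne
  refine ⟨x₀, le_antisymm (le_iSup (fun x => horizon f (u, x)) x₀) ?_⟩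
  rwa [← horizon_iSup_eq_iSup_horizon hK husc u]

end HorizonCondition

/-- Proposition 4.3 (Rockafellar–Wets 3.31 & 1.17): parametric maximization under a
horizon (level-boundedness) condition. -/
theorem parametric_maximization
    {m n : ℕ}
    (f : EuclideanSpace ℝ (Fin m) × EuclideanSpace ℝ (Fin n) → EReal)
    (hnt : ∀ z, f z ≠ ⊤)
    (hproper : ∃ z, f z ≠ ⊥)
    (husc : UpperSemicontinuous f)
    (hK : {x : EuclideanSpace ℝ (Fin n) | 0 ≤ horizon f ((0 : EuclideanSpace ℝ (Fin m)), x)}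
      = {0}) :
    (∃ u, (⨆ x, f (u, x)) ≠ ⊥) ∧
    (∀ u, (⨆ x, f (u, x)) ≠ ⊤) ∧
    UpperSemicontinuous (fun u : EuclideanSpace ℝ (Fin m) => ⨆ x, f (u, x)) ∧
    (∀ u, (⨆ x, f (u, x)) ≠ ⊥ → ∃ xu, f (u, xu) = ⨆ x, f (u, x)) ∧
    (∀ u, horizon (fun u' : EuclideanSpace ℝ (Fin m) => ⨆ x, f (u', x)) u =
      ⨆ x, horizon f (u, x)) ∧
    (∀ u, horizon (fun u' : EuclideanSpace ℝ (Fin m) => ⨆ x, f (u', x)) u ≠ ⊥ →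
      ∃ xu, horizon f (u, xu) = ⨆ x, horizon f (u, x)) := by
  have hK' : ∀ x, 0 ≤ horizon f (0, x) → x = 0 := fun x hx => (Set.ext_iff.1 hK x).1 hx
  obtain ⟨z, hz⟩ := hproper
  exact ⟨⟨z.1, ne_bot_of_le_ne_bot hz (le_iSup (fun x => f (z.1, x)) z.2)⟩,
    iSup_ne_top_of_forall_ne_top hnt hK' husc, upperSemicontinuous_iSup hK' husc,
    fun u _ => exists_apply_eq_iSup hK' husc u, horizon_iSup_eq_iSup_horizon hK' husc,
    fun _ => exists_horizon_eq_iSup_horizon hK' husc⟩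

end
end

section
/- Let f : ℝ → ℝ be upper semicontinuous with f(0) = 0, f^∞(0) = 0 and f^∞(x) < 0 for all x ≠ 0, and let g : ℝ → ℝ be continuous and positively homogeneous (g(λx) = λg(x) for all λ ≥ 0 and x ∈ ℝ) with f^∞(x) < g(x) < 0 for all x ≠ 0. Then there exists a ∈ ℝ such that f(x) ≤ a + g(x) for all x ∈ ℝ. -/
open scoped ENNReal

noncomputable section

/-! Along the ray through `x`, the horizon function is the limsup of `f (δ • x) / δ`, so a strict
upper bound on `f^∞(x)` bounds `f` linearly far out on that ray. Applied to `x = ± 1`, this gives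
`f ≤ g` outside a compact set. Being positively homogeneous on `ℝ`, `g` is piecewise linear,
hence continuous, so `f - g` is upper semicontinuous and thus bounded above on that compact set. -/

open Filter

theorem eventually_lt_of_horizon_lt {E : Type*} [NormedAddCommGroup E] [NormedSpace ℝ E]
    {f : E → ℝ} {x : E} {c : ℝ} (h : horizon (fun y => (f y : EReal)) x < c) :
    ∀ᶠ δ in atTop, f (δ • x) < δ * c := by
  obtain ⟨n, hn⟩ := iInf_lt_iff.mp h
  filter_upwards [eventually_gt_atTop ((n : ℝ) + 1)] with δ hδ
  have hδ0 : 0 < δ := lt_trans (by positivity) hδ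
  have hle : ((δ⁻¹ * f (δ • x) : ℝ) : EReal) ≤
      ⨆ (δ : ℝ) (_ : ((n : ℝ) + 1) < δ) (y : E) (_ : ‖x - y‖ < 1 / ((n : ℝ) + 1)),
        ((δ⁻¹ : ℝ) : EReal) * (f (δ • y) : EReal) :=
    le_iSup₂_of_le δ hδ <| le_iSup₂_of_le x (by simp; positivity) (EReal.coe_mul _ _).le
  have hlt : δ⁻¹ * f (δ • x) < c := EReal.coe_lt_coe_iff.mp (hle.trans_lt hn)
  rwa [inv_mul_lt_iff₀ hδ0] at hlt

theorem continuous_of_homogeneous {g : ℝ → ℝ} (hhom : ∀ c : ℝ, 0 ≤ c → ∀ x, g (c * x) = c * g x) :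
    Continuous g := by
  have hg : g = fun x => max x 0 * g 1 + max (-x) 0 * g (-1) := by
    funext x
    rcases le_total 0 x with hx | hx
    · simpa [hx] using hhom x hx 1
    · simpa [hx] using hhom (-x) (neg_nonneg.mpr hx) (-1)
  rw [hg]
  fun_prop

theorem UpperSemicontinuous.exists_le_add_of_eventually_le_cocompact {X : Type*}
    [TopologicalSpace X] {f g : X → ℝ} (hf : UpperSemicontinuous f) (hg : Continuous g)
    (h : ∀ᶠ x in cocompact X, f x ≤ g x) : ∃ a, ∀ x, f x ≤ a + g x := by
  obtain ⟨K, hK, hKc⟩ := mem_cocompact.mp h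
  have husc : UpperSemicontinuous fun x => f x - g x := by
    simp_rw [sub_eq_add_neg]
    exact hf.add hg.neg.upperSemicontinuous
  obtain ⟨M, hM⟩ := (husc.upperSemicontinuousOn K).bddAbove_of_isCompact hK
  refine ⟨max M 0, fun x => ?_⟩
  by_cases hx : x ∈ K
  · linarith [hM ⟨x, hx, rfl⟩, le_max_left M 0]
  · have hfg : f x ≤ g x := hKc hx
    linarith [le_max_right M 0]

theorem dominated_by_translate_of_homogeneous_general
    (f : ℝ → ℝ) (hf : UpperSemicontinuous f)
    (g : ℝ → ℝ)
    (hhom : ∀ (c : ℝ), 0 ≤ c → ∀ x : ℝ, g (c * x) = c * g x)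
    (hlt : ∀ x : ℝ, x ≠ 0 → horizon (fun y : ℝ => (f y : EReal)) x < (g x : EReal)) :
    ∃ a : ℝ, ∀ x : ℝ, f x ≤ a + g x := by
  have hright : ∀ᶠ x in atTop, f x ≤ g x := by
    filter_upwards [eventually_lt_of_horizon_lt (hlt 1 one_ne_zero),
      eventually_ge_atTop 0] with x hx hx0
    simpa [← hhom x hx0 1] using hx.le
  have hleft : ∀ᶠ x in atBot, f x ≤ g x := by
    filter_upwards [tendsto_neg_atBot_atTop.eventually
      (eventually_lt_of_horizon_lt (hlt (-1) (by norm_num))),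
      eventually_le_atBot 0] with x hx hx0
    simpa [← hhom (-x) (by linarith) (-1)] using hx.le
  refine hf.exists_le_add_of_eventually_le_cocompact (continuous_of_homogeneous hhom) ?_
  rw [cocompact_eq_atBot_atTop]
  exact eventually_sup.mpr ⟨hleft, hright⟩

/-- The domination estimate of Remark 2.8: an upper semicontinuous function whose horizon
function is dominated by a negative continuous positively homogeneous function is bounded
above by a translate of the latter. -/
theorem dominated_by_translate_of_homogeneous
    (f : ℝ → ℝ) (hf : UpperSemicontinuous f) (hf0 : f 0 = 0)
    (hhor0 : horizon (fun y : ℝ => (f y : EReal)) 0 = 0)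
    (hhorneg : ∀ x : ℝ, x ≠ 0 → horizon (fun y : ℝ => (f y : EReal)) x < 0)
    (g : ℝ → ℝ) (hg : Continuous g)
    (hhom : ∀ (c : ℝ), 0 ≤ c → ∀ x : ℝ, g (c * x) = c * g x)
    (hlt : ∀ x : ℝ, x ≠ 0 → horizon (fun y : ℝ => (f y : EReal)) x < (g x : EReal))
    (hgneg : ∀ x : ℝ, x ≠ 0 → g x < 0) :
    ∃ a : ℝ, ∀ x : ℝ, f x ≤ a + g x :=
  dominated_by_translate_of_homogeneous_general f hf g hhom hlt

end
end
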